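/- arXiv:cs/0703005 — 2 statements merged into one kernel-verified Lean document; each statement's English description precedes it below -/
import Mathlib

section
/- Any conditional distribution p(a|b) from a finite set ℬ to a finite set 𝒜 can be represented as p(a|b) = ∑_c p(c) · 1{a = f(b,c)} for some finite set 𝒞 with |𝒞| ≤ (|𝒜| − 1)·|ℬ| + 1, a probability distribution p(c) on 𝒞, and a deterministic function f : ℬ × 𝒞 → 𝒜. -/
/-- Functional representation of a channel: any conditional distribution
`p(a|b)` on finite sets is a mixture of at most `(|𝒜|−1)|ℬ|+1` deterministic
maps: `p(a|b) = ∑ c, q(c) · 1{a = f(b,c)}`. -/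
theorem functional_representation
    {𝒜 ℬ : Type*} [Fintype 𝒜] [Fintype ℬ] [DecidableEq 𝒜]
    (p : ℬ → 𝒜 → ℝ)
    (hnonneg : ∀ b a, 0 ≤ p b a)
    (hsum : ∀ b, ∑ a, p b a = 1) :
    ∃ (m : ℕ) (q : Fin m → ℝ) (f : ℬ → Fin m → 𝒜),
      m ≤ (Fintype.card 𝒜 - 1) * Fintype.card ℬ + 1 ∧
      (∀ c, 0 ≤ q c) ∧ (∑ c, q c = 1) ∧
      (∀ b a, p b a = ∑ c, q c * (if a = f b c then (1 : ℝ) else 0)) := by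
  classical
  cases isEmpty_or_nonempty 𝒜 with
  | inl hA =>
    have hB : IsEmpty ℬ := by
      constructor; intro b
      have := hsum b
      simp at this
    exact ⟨1, fun _ => 1, fun b => isEmptyElim b, by simp, fun _ => zero_le_one, by simp,
      fun b => isEmptyElim b⟩
  | inr hA =>
  obtain ⟨a₀⟩ := hA
  -- the set of deterministic channels
  set D : Set (ℬ → 𝒜 → ℝ) :=
    {M | ∃ g : ℬ → 𝒜, M = fun b a => if a = g b then (1:ℝ) else 0} with hD
  set w : (ℬ → 𝒜) → ℝ := fun g => ∏ b, p b (g b) with hwdef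
  have hw0 : ∀ g, 0 ≤ w g := fun g => Finset.prod_nonneg fun b _ => hnonneg b (g b)
  have hw1 : ∑ g : ℬ → 𝒜, w g = 1 := by
    rw [hwdef]
    rw [← Fintype.prod_sum]
    simp [hsum]
  have key : ∀ b a, ∑ g : ℬ → 𝒜, w g * (if a = g b then (1:ℝ) else 0) = p b a := by
    intro b a
    set F : ℬ → 𝒜 → ℝ :=
      fun b' x => if b' = b then p b' x * (if a = x then (1:ℝ) else 0) else p b' x with hF
    have step : ∀ g : ℬ → 𝒜, w g * (if a = g b then (1:ℝ) else 0)
        = ∏ b', F b' (g b') := by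
      intro g
      have hwg : w g = ∏ b', p b' (g b') := rfl
      rw [hwg, hF]
      rw [Finset.prod_eq_mul_prod_sdiff_singleton_of_mem (Finset.mem_univ b)
            (fun b' => p b' (g b')),
          Finset.prod_eq_mul_prod_sdiff_singleton_of_mem (Finset.mem_univ b)
            (fun b' => (if b' = b then p b' (g b') * (if a = g b' then (1:ℝ) else 0)
              else p b' (g b')))]
      rw [if_pos rfl]
      rw [Finset.prod_congr rfl (fun x hx => if_neg
        (Finset.notMem_singleton.mp (Finset.mem_sdiff.mp hx).2))]
      ring
    rw [Finset.sum_congr rfl (fun g _ => step g), ← Fintype.prod_sum F]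
    have hfac : ∀ b' : ℬ, (∑ x : 𝒜, F b' x) = (if b' = b then p b a else 1) := by
      intro b'
      by_cases h : b' = b
      · subst h
        simp [hF, mul_ite]
      · simp [hF, h, hsum b']
    rw [Finset.prod_congr rfl (fun b' _ => hfac b')]
    simp
  -- p lies in the convex hull of D
  have hmem : p ∈ convexHull ℝ D := by
    have hcm : (Finset.univ : Finset (ℬ → 𝒜)).centerMass w
        (fun g => (fun b a => if a = g b then (1:ℝ) else 0 : ℬ → 𝒜 → ℝ)) = p := by
      rw [Finset.centerMass_eq_of_sum_1 _ _ hw1]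
      funext b a
      rw [Finset.sum_apply, Finset.sum_apply]
      simp only [Pi.smul_apply, smul_eq_mul]
      exact key b a
    rw [← hcm]
    exact Finset.centerMass_mem_convexHull _ (fun g _ => hw0 g)
      (by rw [hw1]; norm_num) (fun g _ => ⟨g, rfl⟩)
  obtain ⟨ι, hfin, z, v, hrange, hai, hv0, hv1, hvz⟩ :=
    eq_pos_convex_span_of_mem_convexHull hmem
  -- the row-sum linear map
  let L : (ℬ → 𝒜 → ℝ) →ₗ[ℝ] (ℬ → ℝ) :=
    { toFun := fun M b => ∑ a, M b a
      map_add' := by intro x y; funext b; simp [Finset.sum_add_distrib]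
      map_smul' := by intro c x; funext b; simp [Finset.mul_sum] }
  have hLdet : ∀ M ∈ D, L M = fun _ => (1:ℝ) := by
    rintro M ⟨g, rfl⟩
    funext b
    simp [L]
  have hspan : vectorSpan ℝ (Set.range z) ≤ LinearMap.ker L := by
    rw [vectorSpan_def, Submodule.span_le]
    rintro u hu
    obtain ⟨x, hx, y, hy, rfl⟩ := hu
    obtain ⟨i, rfl⟩ := hx
    obtain ⟨j, rfl⟩ := hy
    have hx1 := hLdet _ (hrange ⟨i, rfl⟩)
    have hy1 := hLdet _ (hrange ⟨j, rfl⟩)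
    simp only [SetLike.mem_coe, LinearMap.mem_ker, vsub_eq_sub, map_sub, hx1, hy1, sub_self]
  -- dimension count
  have hsurj : Function.Surjective L := by
    intro u
    refine ⟨fun b a => if a = a₀ then u b else 0, ?_⟩
    funext b
    simp [L]
  have hdim : Module.finrank ℝ (LinearMap.ker L)
      = Fintype.card ℬ * Fintype.card 𝒜 - Fintype.card ℬ := by
    have h1 := LinearMap.finrank_range_add_finrank_ker L
    rw [LinearMap.range_eq_top.mpr hsurj, finrank_top] at h1
    have h2 : Module.finrank ℝ (ℬ → ℝ) = Fintype.card ℬ := Module.finrank_pi ℝ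
    have h3 : Module.finrank ℝ (ℬ → 𝒜 → ℝ) = Fintype.card ℬ * Fintype.card 𝒜 := by
      rw [Module.finrank_pi_fintype]
      simp [Module.finrank_pi]
    omega
  have hcard : Fintype.card ι ≤ (Fintype.card 𝒜 - 1) * Fintype.card ℬ + 1 := by
    have h1 := hai.card_le_finrank_succ
    have h2 : Module.finrank ℝ (vectorSpan ℝ (Set.range z))
        ≤ Module.finrank ℝ (LinearMap.ker L) := Submodule.finrank_mono hspan
    have h3 : 1 ≤ Fintype.card 𝒜 := Fintype.card_pos_iff.mpr ⟨a₀⟩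
    have h4 : (Fintype.card 𝒜 - 1) * Fintype.card ℬ
        = Fintype.card 𝒜 * Fintype.card ℬ - Fintype.card ℬ := by
      rw [Nat.sub_mul, one_mul]
    rw [h4]
    have h5 : Fintype.card ℬ * Fintype.card 𝒜 = Fintype.card 𝒜 * Fintype.card ℬ :=
      Nat.mul_comm _ _
    have := Nat.le_trans h1 (Nat.add_le_add_right h2 1)
    omega
  -- extract the deterministic maps
  have hzD : ∀ i : ι, ∃ g : ℬ → 𝒜, z i = fun b a => if a = g b then (1:ℝ) else 0 :=
    fun i => hrange ⟨i, rfl⟩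
  choose G hG using hzD
  let e : Fin (Fintype.card ι) ≃ ι := (Fintype.equivFin ι).symm
  refine ⟨Fintype.card ι, fun c => v (e c), fun b c => G (e c) b, hcard,
    fun c => (hv0 (e c)).le, ?_, ?_⟩
  · rw [← hv1]
    exact Fintype.sum_equiv e _ _ (fun c => rfl)
  · intro b a
    have : p b a = ∑ i : ι, v i • z i b a := by
      rw [← hvz]
      rw [Finset.sum_apply, Finset.sum_apply]
      simp only [Pi.smul_apply]
    rw [this, ← Equiv.sum_comp e (fun i => v i • z i b a)]
    refine Finset.sum_congr rfl fun c _ => ?_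
    rw [hG (e c)]
    simp
end

section
/- Let γ ∈ [0,1], P, Q, N > 0. Define R(γ) = ½ log(1 + γP/N) and Δ(γ) = ½ log(1 + (√Q + √((1−γ)P))² / (γP + N)). Then R(γ) + Δ(γ) = ½ log((γP + N + (√Q + √((1−γ)P))²)/N), and this sum is maximized over γ ∈ [0,1] at γ = 0, with maximum value ½ log(1 + (√P + √Q)²/N). -/
/-!
The two logarithms telescope, since `(1 + γP/N)(1 + B/(γP + N)) = (γP + N + B)/N`. In the
resulting argument, the power `γP` taken away from the coherent part `√((1-γ)P)` is exactly
compensated in `γP + (1-γ)P = P`, while the cross term `2√Q√((1-γ)P)` only decreases in `γ`.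
-/

open Real

theorem log_one_add_div_add_log_one_add_div {a b c : ℝ} (hc : c ≠ 0) (hac : a + c ≠ 0)
    (habc : a + c + b ≠ 0) :
    log (1 + a / c) + log (1 + b / (a + c)) = log ((a + c + b) / c) := by
  rw [one_add_div hc, one_add_div hac, add_comm c,
    ← log_mul (div_ne_zero hac hc) (div_ne_zero habc hac)]
  congr 1
  field_simp

theorem sub_add_sq_add_sqrt_le {p t s : ℝ} (ht : 0 ≤ t) (htp : t ≤ p) (hs : 0 ≤ s) :
    p - t + (s + √t) ^ 2 ≤ (√p + s) ^ 2 := by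
  have hsqrt : √t ≤ √p := sqrt_le_sqrt htp
  nlinarith [sq_sqrt ht, sq_sqrt (ht.trans htp), sqrt_nonneg t]

theorem wdp_sum_rate_maximized_at_zero_general
    (P Q N : ℝ) (hP : 0 < P) (hN : 0 < N) :
    (∀ γ ∈ Set.Icc (0 : ℝ) 1,
      (1/2) * Real.log (1 + γ * P / N) +
        (1/2) * Real.log (1 + (Real.sqrt Q + Real.sqrt ((1 - γ) * P))^2 / (γ * P + N))
      = (1/2) * Real.log ((γ * P + N + (Real.sqrt Q + Real.sqrt ((1 - γ) * P))^2) / N)) ∧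
    (∀ γ ∈ Set.Icc (0 : ℝ) 1,
      (1/2) * Real.log (1 + γ * P / N) +
        (1/2) * Real.log (1 + (Real.sqrt Q + Real.sqrt ((1 - γ) * P))^2 / (γ * P + N))
      ≤ (1/2) * Real.log (1 + (Real.sqrt P + Real.sqrt Q)^2 / N)) ∧
    ((1/2) * Real.log (1 + (0 : ℝ) * P / N) +
        (1/2) * Real.log (1 + (Real.sqrt Q + Real.sqrt ((1 - 0) * P))^2 / (0 * P + N))
      = (1/2) * Real.log (1 + (Real.sqrt P + Real.sqrt Q)^2 / N)) := by
  have hsum : ∀ γ ∈ Set.Icc (0 : ℝ) 1,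
      (1/2) * log (1 + γ * P / N) + (1/2) * log (1 + (√Q + √((1 - γ) * P))^2 / (γ * P + N))
      = (1/2) * log ((γ * P + N + (√Q + √((1 - γ) * P))^2) / N) := by
    rintro γ ⟨hγ0, -⟩
    rw [← mul_add, log_one_add_div_add_log_one_add_div hN.ne' (by positivity) (by positivity)]
  refine ⟨hsum, fun γ hγ => ?_, by norm_num [add_comm]⟩
  obtain ⟨hγ0, hγ1⟩ := hγ
  have hpower := sub_add_sq_add_sqrt_le (p := P) (s := √Q)
    (mul_nonneg (sub_nonneg.2 hγ1) hP.le) (by nlinarith) (sqrt_nonneg Q)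
  rw [hsum γ ⟨hγ0, hγ1⟩, one_add_div hN.ne']
  gcongr _ * log (?_ / _)
  linarith [show P - (1 - γ) * P = γ * P by ring]

/-- For the writing-on-dirty-paper tradeoff boundary
`R(γ) = ½ log(1 + γP/N)` and
`Δ(γ) = ½ log(1 + (√Q + √((1−γ)P))²/(γP + N))`, the sum satisfies
`R(γ) + Δ(γ) = ½ log((γP + N + (√Q + √((1−γ)P))²)/N)`, and it is maximized
over `γ ∈ [0,1]` at `γ = 0` with value `½ log(1 + (√P + √Q)²/N)`. -/
theorem wdp_sum_rate_maximized_at_zero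
    (P Q N : ℝ) (hP : 0 < P) (hQ : 0 < Q) (hN : 0 < N) :
    (∀ γ ∈ Set.Icc (0 : ℝ) 1,
      (1/2) * Real.log (1 + γ * P / N) +
        (1/2) * Real.log (1 + (Real.sqrt Q + Real.sqrt ((1 - γ) * P))^2 / (γ * P + N))
      = (1/2) * Real.log ((γ * P + N + (Real.sqrt Q + Real.sqrt ((1 - γ) * P))^2) / N)) ∧
    (∀ γ ∈ Set.Icc (0 : ℝ) 1,
      (1/2) * Real.log (1 + γ * P / N) +
        (1/2) * Real.log (1 + (Real.sqrt Q + Real.sqrt ((1 - γ) * P))^2 / (γ * P + N))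
      ≤ (1/2) * Real.log (1 + (Real.sqrt P + Real.sqrt Q)^2 / N)) ∧
    ((1/2) * Real.log (1 + (0 : ℝ) * P / N) +
        (1/2) * Real.log (1 + (Real.sqrt Q + Real.sqrt ((1 - 0) * P))^2 / (0 * P + N))
      = (1/2) * Real.log (1 + (Real.sqrt P + Real.sqrt Q)^2 / N)) :=
  wdp_sum_rate_maximized_at_zero_general P Q N hP hN
end
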